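/- Define G_{αβγ} = (1/4)[tr(λ_α)tr(λ_β)tr(λ_γ) + tr(λ_α λ_β λ_γ + λ_α λ_γ λ_β) − tr(λ_α)tr(λ_β λ_γ) − tr(λ_β)tr(λ_γ λ_α) − tr(λ_γ)tr(λ_α λ_β)] for α,β,γ ∈ {0,…,8}, where λ₀ = √(2/3)𝟙₃ and λ₁,…,λ₈ are Gell-Mann matrices. Then G is totally symmetric in its three indices, and for every hermitian K = (1/2) K_α λ_α, one has det(K) = (1/12) G_{αβγ} K_α K_β K_γ. -/
import Mathlib

/-- λ₀ = √(2/3)·𝟙₃ together with the eight Gell-Mann matrices λ₁,…,λ₈. -/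
noncomputable def gm : Fin 9 → Matrix (Fin 3) (Fin 3) ℂ
  | 0 => (Real.sqrt (2 / 3) : ℂ) • 1
  | 1 => !![0, 1, 0; 1, 0, 0; 0, 0, 0]
  | 2 => !![0, -Complex.I, 0; Complex.I, 0, 0; 0, 0, 0]
  | 3 => !![1, 0, 0; 0, -1, 0; 0, 0, 0]
  | 4 => !![0, 0, 1; 0, 0, 0; 1, 0, 0]
  | 5 => !![0, 0, -Complex.I; 0, 0, 0; Complex.I, 0, 0]
  | 6 => !![0, 0, 0; 0, 0, 1; 0, 1, 0]
  | 7 => !![0, 0, 0; 0, 0, -Complex.I; 0, Complex.I, 0]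
  | 8 => ((1 / Real.sqrt 3 : ℝ) : ℂ) • !![1, 0, 0; 0, 1, 0; 0, 0, -2]

/-- The totally symmetric constants G_{αβγ} built from traces of the λ matrices. -/
noncomputable def Gconst (α β γ : Fin 9) : ℂ :=
  (1 / 4 : ℂ) * ((gm α).trace * (gm β).trace * (gm γ).trace
    + (gm α * gm β * gm γ + gm α * gm γ * gm β).trace
    - (gm α).trace * (gm β * gm γ).trace
    - (gm β).trace * (gm γ * gm α).trace
    - (gm γ).trace * (gm α * gm β).trace)

lemma sum9 {M : Type*} [AddCommMonoid M] (f : Fin 9 → M) :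
    ∑ α, f α = f 0 + f 1 + f 2 + f 3 + f 4 + f 5 + f 6 + f 7 + f 8 := by
  simp [Fin.sum_univ_succ,
    show (Fin.succ 2 : Fin 9) = 3 from rfl,
    show ((Fin.succ 2).succ : Fin 9) = 4 from rfl,
    show ((Fin.succ 2).succ.succ : Fin 9) = 5 from rfl,
    show ((Fin.succ 2).succ.succ.succ : Fin 9) = 6 from rfl,
    show ((Fin.succ 2).succ.succ.succ.succ : Fin 9) = 7 from rfl,
    show ((Fin.succ 2).succ.succ.succ.succ.succ : Fin 9) = 8 from rfl,
    add_assoc]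

lemma gm0 : gm 0 = (Real.sqrt (2 / 3) : ℂ) • 1 := rfl
lemma gm1 : gm 1 = !![0, 1, 0; 1, 0, 0; 0, 0, 0] := rfl
lemma gm2 : gm 2 = !![0, -Complex.I, 0; Complex.I, 0, 0; 0, 0, 0] := rfl
lemma gm3 : gm 3 = !![1, 0, 0; 0, -1, 0; 0, 0, 0] := rfl
lemma gm4 : gm 4 = !![0, 0, 1; 0, 0, 0; 1, 0, 0] := rfl
lemma gm5 : gm 5 = !![0, 0, -Complex.I; 0, 0, 0; Complex.I, 0, 0] := rfl
lemma gm6 : gm 6 = !![0, 0, 0; 0, 0, 1; 0, 1, 0] := rfl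
lemma gm7 : gm 7 = !![0, 0, 0; 0, 0, -Complex.I; 0, Complex.I, 0] := rfl
lemma gm8 : gm 8 = ((1 / Real.sqrt 3 : ℝ) : ℂ) • !![1, 0, 0; 0, 1, 0; 0, 0, -2] := rfl

variable (K : Matrix (Fin 3) (Fin 3) ℂ)

lemma ht0 : (K * gm 0).trace = (Real.sqrt (2/3) : ℂ) * (K 0 0 + K 1 1 + K 2 2) := by
  rw [gm0]; simp [Matrix.trace_fin_three, Matrix.mul_apply, Fin.sum_univ_succ, Matrix.one_apply]
lemma ht1 : (K * gm 1).trace = K 0 1 + K 1 0 := by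
  rw [gm1]; simp [Matrix.trace_fin_three, Matrix.mul_apply, Fin.sum_univ_succ]
lemma ht2 : (K * gm 2).trace = Complex.I * (K 0 1 - K 1 0) := by
  rw [gm2]; simp [Matrix.trace_fin_three, Matrix.mul_apply, Fin.sum_univ_succ]; ring
lemma ht3 : (K * gm 3).trace = K 0 0 - K 1 1 := by
  rw [gm3]; simp [Matrix.trace_fin_three, Matrix.mul_apply, Fin.sum_univ_succ]; ring
lemma ht4 : (K * gm 4).trace = K 0 2 + K 2 0 := by
  rw [gm4]; simp [Matrix.trace_fin_three, Matrix.mul_apply, Fin.sum_univ_succ]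
lemma ht5 : (K * gm 5).trace = Complex.I * (K 0 2 - K 2 0) := by
  rw [gm5]; simp [Matrix.trace_fin_three, Matrix.mul_apply, Fin.sum_univ_succ]; ring
lemma ht6 : (K * gm 6).trace = K 1 2 + K 2 1 := by
  rw [gm6]; simp [Matrix.trace_fin_three, Matrix.mul_apply, Fin.sum_univ_succ]
lemma ht7 : (K * gm 7).trace = Complex.I * (K 1 2 - K 2 1) := by
  rw [gm7]; simp [Matrix.trace_fin_three, Matrix.mul_apply, Fin.sum_univ_succ]; ring
lemma ht8 : (K * gm 8).trace = ((1 / Real.sqrt 3 : ℝ) : ℂ) * (K 0 0 + K 1 1 - 2 * K 2 2) := by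
  rw [gm8]; simp [Matrix.trace_fin_three, Matrix.mul_apply, Fin.sum_univ_succ]; ring

set_option maxHeartbeats 1000000 in
lemma completeness : ∑ α, (K * gm α).trace • gm α = (2 : ℂ) • K := by
  have h23 : (Real.sqrt (2/3) : ℂ) * (Real.sqrt (2/3) : ℂ) = 2/3 := by
    rw [← Complex.ofReal_mul, Real.mul_self_sqrt (by norm_num)]
    norm_num
  have h3 : ((1 / Real.sqrt 3 : ℝ) : ℂ) * ((1 / Real.sqrt 3 : ℝ) : ℂ) = 1/3 := by
    rw [← Complex.ofReal_mul, div_mul_div_comm, Real.mul_self_sqrt (by norm_num)]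
    norm_num
  have h2sq : ((Real.sqrt 2 : ℝ) : ℂ)^2 = 2 := by
    rw [sq, ← Complex.ofReal_mul, Real.mul_self_sqrt (by norm_num)]; norm_num
  have h3inv : (((Real.sqrt 3 : ℝ) : ℂ))⁻¹^2 = (3 : ℂ)⁻¹ := by
    rw [inv_pow, sq, ← Complex.ofReal_mul, Real.mul_self_sqrt (by norm_num)]; norm_num
  rw [sum9, ht0, ht1, ht2, ht3, ht4, ht5, ht6, ht7, ht8,
    gm0, gm1, gm2, gm3, gm4, gm5, gm6, gm7, gm8]
  ext i j
  fin_cases i <;> fin_cases j <;>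
    · simp [Matrix.one_apply, Matrix.vecHead, Matrix.vecTail]
      ring_nf
      simp [Complex.I_sq, mul_comm, mul_assoc, mul_left_comm, h23, h3, h2sq, h3inv]
      ring_nf

lemma det3 (M : Matrix (Fin 3) (Fin 3) ℂ) :
    M.det = (1/6) * (M.trace^3 - 3*M.trace*(M*M).trace + 2*(M*M*M).trace) := by
  simp [Matrix.det_fin_three, Matrix.trace_fin_three, Matrix.mul_apply, Fin.sum_univ_succ]
  ring

lemma mulsum2 (A B : Fin 9 → Matrix (Fin 3) (Fin 3) ℂ) :
    (∑ α, A α) * (∑ β, B β) = ∑ α, ∑ β, A α * B β := by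
  rw [Finset.sum_mul]
  exact Finset.sum_congr rfl fun α _ => Finset.mul_sum _ _ _

lemma mulsum3 (A B C : Fin 9 → Matrix (Fin 3) (Fin 3) ℂ) :
    (∑ α, A α) * (∑ β, B β) * (∑ γ, C γ) = ∑ α, ∑ β, ∑ γ, A α * B β * C γ := by
  rw [mulsum2 A B, Finset.sum_mul]
  refine Finset.sum_congr rfl fun α _ => ?_
  rw [Finset.sum_mul]
  exact Finset.sum_congr rfl fun β _ => Finset.mul_sum _ _ _

section
variable (K : Matrix (Fin 3) (Fin 3) ℂ)

noncomputable def c (K : Matrix (Fin 3) (Fin 3) ℂ) (α : Fin 9) : ℂ := (K * gm α).trace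

lemma hM : ∑ α, c K α • gm α = (2 : ℂ) • K := completeness K

lemma hS1 : ∑ α, (gm α).trace * c K α = 2 * K.trace := by
  have := congrArg Matrix.trace (hM K)
  simpa [Matrix.trace_sum, Matrix.trace_smul, mul_comm, smul_eq_mul] using this

lemma hS2 : ∑ α, ∑ β, (gm α * gm β).trace * (c K α * c K β) = 4 * (K*K).trace := by
  have h2 : ((∑ α, c K α • gm α) * (∑ β, c K β • gm β)).trace = (((2:ℂ)•K) * ((2:ℂ)•K)).trace := by
    rw [hM]
  rw [mulsum2] at h2
  calc ∑ α, ∑ β, (gm α * gm β).trace * (c K α * c K β)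
      = (∑ α, ∑ β, (c K α • gm α) * (c K β • gm β)).trace := by
        rw [Matrix.trace_sum]
        refine Finset.sum_congr rfl fun α _ => ?_
        rw [Matrix.trace_sum]
        refine Finset.sum_congr rfl fun β _ => ?_
        simp only [smul_mul_assoc, mul_smul_comm, smul_smul, Matrix.trace_smul, smul_eq_mul]
        ring
    _ = (((2:ℂ)•K) * ((2:ℂ)•K)).trace := h2
    _ = 4 * (K*K).trace := by
        simp only [smul_mul_assoc, mul_smul_comm, smul_smul, Matrix.trace_smul, smul_eq_mul]
        norm_num

lemma hS3 : ∑ α, ∑ β, ∑ γ, (gm α * gm β * gm γ).trace * (c K α * c K β * c K γ)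
    = 8 * (K*K*K).trace := by
  have h2 : ((∑ α, c K α • gm α) * (∑ β, c K β • gm β) * (∑ γ, c K γ • gm γ)).trace
      = (((2:ℂ)•K) * ((2:ℂ)•K) * ((2:ℂ)•K)).trace := by rw [hM]
  rw [mulsum3] at h2
  calc ∑ α, ∑ β, ∑ γ, (gm α * gm β * gm γ).trace * (c K α * c K β * c K γ)
      = (∑ α, ∑ β, ∑ γ, (c K α • gm α) * (c K β • gm β) * (c K γ • gm γ)).trace := by
        rw [Matrix.trace_sum]
        refine Finset.sum_congr rfl fun α _ => ?_
        rw [Matrix.trace_sum]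
        refine Finset.sum_congr rfl fun β _ => ?_
        rw [Matrix.trace_sum]
        refine Finset.sum_congr rfl fun γ _ => ?_
        simp only [smul_mul_assoc, mul_smul_comm, smul_smul, Matrix.trace_smul, smul_eq_mul]
        ring
    _ = (((2:ℂ)•K) * ((2:ℂ)•K) * ((2:ℂ)•K)).trace := h2
    _ = 8 * (K*K*K).trace := by
        simp only [smul_mul_assoc, mul_smul_comm, smul_smul, Matrix.trace_smul, smul_eq_mul]
        norm_num

end

lemma facA (f : Fin 9 → ℂ) (g : Fin 9 → Fin 9 → ℂ) :
    ∑ α, ∑ β, ∑ γ, f α * g β γ = (∑ α, f α) * (∑ β, ∑ γ, g β γ) := by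
  rw [Finset.sum_mul]
  refine Finset.sum_congr rfl fun α _ => ?_
  rw [Finset.mul_sum]
  exact Finset.sum_congr rfl fun β _ => (Finset.mul_sum _ _ _).symm

lemma fac3 (f g h : Fin 9 → ℂ) :
    ∑ α, ∑ β, ∑ γ, f α * g β * h γ = (∑ α, f α) * (∑ β, g β) * (∑ γ, h γ) := by
  calc ∑ α, ∑ β, ∑ γ, f α * g β * h γ = ∑ α, ∑ β, ∑ γ, f α * (g β * h γ) := by
        refine Finset.sum_congr rfl fun α _ => Finset.sum_congr rfl fun β _ =>
          Finset.sum_congr rfl fun γ _ => by ring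
    _ = (∑ α, f α) * (∑ β, ∑ γ, g β * h γ) := facA f (fun β γ => g β * h γ)
    _ = (∑ α, f α) * ((∑ β, g β) * (∑ γ, h γ)) := by
        rw [← Finset.sum_mul_sum]
    _ = _ := by ring

lemma facB (f : Fin 9 → ℂ) (g : Fin 9 → Fin 9 → ℂ) :
    ∑ α, ∑ β, ∑ γ, f β * g γ α = (∑ α, f α) * (∑ β, ∑ γ, g β γ) := by
  have step : ∀ α : Fin 9, ∑ β, ∑ γ, f β * g γ α = (∑ β, f β) * (∑ γ, g γ α) := by
    intro α
    rw [Finset.sum_mul]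
    refine Finset.sum_congr rfl fun β _ => ?_
    rw [Finset.mul_sum]
  calc ∑ α, ∑ β, ∑ γ, f β * g γ α = ∑ α, (∑ β, f β) * (∑ γ, g γ α) :=
        Finset.sum_congr rfl fun α _ => step α
    _ = (∑ β, f β) * ∑ α, ∑ γ, g γ α := by rw [Finset.mul_sum]
    _ = (∑ α, f α) * (∑ β, ∑ γ, g β γ) := by rw [Finset.sum_comm]

lemma facC (f : Fin 9 → ℂ) (g : Fin 9 → Fin 9 → ℂ) :
    ∑ α, ∑ β, ∑ γ, f γ * g α β = (∑ α, f α) * (∑ β, ∑ γ, g β γ) := by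
  have step : ∀ α β : Fin 9, ∑ γ, f γ * g α β = (∑ γ, f γ) * g α β := by
    intro α β; rw [Finset.sum_mul]
  calc ∑ α, ∑ β, ∑ γ, f γ * g α β = ∑ α, ∑ β, (∑ γ, f γ) * g α β :=
        Finset.sum_congr rfl fun α _ => Finset.sum_congr rfl fun β _ => step α β
    _ = (∑ γ, f γ) * ∑ α, ∑ β, g α β := by
        rw [Finset.mul_sum]
        refine Finset.sum_congr rfl fun α _ => ?_
        rw [Finset.mul_sum]
    _ = _ := rfl

lemma hS3' (K : Matrix (Fin 3) (Fin 3) ℂ) :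
    ∑ α, ∑ β, ∑ γ, (gm α * gm γ * gm β).trace * (c K α * c K β * c K γ)
      = 8 * (K*K*K).trace := by
  calc ∑ α, ∑ β, ∑ γ, (gm α * gm γ * gm β).trace * (c K α * c K β * c K γ)
      = ∑ α, ∑ γ, ∑ β, (gm α * gm γ * gm β).trace * (c K α * c K β * c K γ) :=
        Finset.sum_congr rfl fun α _ => by rw [Finset.sum_comm]
    _ = ∑ α, ∑ β, ∑ γ, (gm α * gm β * gm γ).trace * (c K α * c K β * c K γ) := by
        refine Finset.sum_congr rfl fun α _ => Finset.sum_congr rfl fun b _ =>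
          Finset.sum_congr rfl fun g _ => by ring
    _ = 8 * (K*K*K).trace := hS3 K

theorem main (K : Matrix (Fin 3) (Fin 3) ℂ) :
    K.det = (1 / 12 : ℂ) * ∑ α, ∑ β, ∑ γ,
      Gconst α β γ * (K * gm α).trace * (K * gm β).trace * (K * gm γ).trace := by
  have key : ∀ α β γ : Fin 9,
      Gconst α β γ * (K * gm α).trace * (K * gm β).trace * (K * gm γ).trace
        = (1/4 : ℂ) * (((gm α).trace * c K α) * ((gm β).trace * c K β) * ((gm γ).trace * c K γ)
          + (gm α * gm β * gm γ).trace * (c K α * c K β * c K γ)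
          + (gm α * gm γ * gm β).trace * (c K α * c K β * c K γ)
          - ((gm α).trace * c K α) * ((gm β * gm γ).trace * (c K β * c K γ))
          - ((gm β).trace * c K β) * ((gm γ * gm α).trace * (c K γ * c K α))
          - ((gm γ).trace * c K γ) * ((gm α * gm β).trace * (c K α * c K β))) := by
    intro α β γ
    show Gconst α β γ * c K α * c K β * c K γ = _
    unfold Gconst
    rw [Matrix.trace_add]
    ring
  simp_rw [key]
  rw [show (∑ α, ∑ β, ∑ γ, (1/4 : ℂ) *
      (((gm α).trace * c K α) * ((gm β).trace * c K β) * ((gm γ).trace * c K γ)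
        + (gm α * gm β * gm γ).trace * (c K α * c K β * c K γ)
        + (gm α * gm γ * gm β).trace * (c K α * c K β * c K γ)
        - ((gm α).trace * c K α) * ((gm β * gm γ).trace * (c K β * c K γ))
        - ((gm β).trace * c K β) * ((gm γ * gm α).trace * (c K γ * c K α))
        - ((gm γ).trace * c K γ) * ((gm α * gm β).trace * (c K α * c K β))))
      = (1/4 : ℂ) * (∑ α, ∑ β, ∑ γ,
      (((gm α).trace * c K α) * ((gm β).trace * c K β) * ((gm γ).trace * c K γ)
        + (gm α * gm β * gm γ).trace * (c K α * c K β * c K γ)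
        + (gm α * gm γ * gm β).trace * (c K α * c K β * c K γ)
        - ((gm α).trace * c K α) * ((gm β * gm γ).trace * (c K β * c K γ))
        - ((gm β).trace * c K β) * ((gm γ * gm α).trace * (c K γ * c K α))
        - ((gm γ).trace * c K γ) * ((gm α * gm β).trace * (c K α * c K β)))) by
    simp only [Finset.mul_sum]]
  simp only [Finset.sum_add_distrib, Finset.sum_sub_distrib]
  rw [fac3 (fun α => (gm α).trace * c K α) (fun β => (gm β).trace * c K β)
      (fun γ => (gm γ).trace * c K γ),
    hS3 K, hS3' K,
    facA (fun α => (gm α).trace * c K α) (fun β γ => (gm β * gm γ).trace * (c K β * c K γ)),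
    facB (fun β => (gm β).trace * c K β) (fun γ α => (gm γ * gm α).trace * (c K γ * c K α)),
    facC (fun γ => (gm γ).trace * c K γ) (fun α β => (gm α * gm β).trace * (c K α * c K β)),
    hS1 K, hS2 K, det3 K]
  ring

lemma Gsym1 (α β γ : Fin 9) : Gconst α β γ = Gconst β α γ := by
  unfold Gconst
  rw [Matrix.trace_add, Matrix.trace_add,
    Matrix.trace_mul_cycle (gm β) (gm α) (gm γ),
    Matrix.trace_mul_cycle (gm β) (gm γ) (gm α),
    Matrix.trace_mul_comm (gm β) (gm γ),
    Matrix.trace_mul_comm (gm γ) (gm α),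
    Matrix.trace_mul_comm (gm β) (gm α),
    Matrix.trace_mul_cycle (gm γ) (gm β) (gm α)]
  ring

lemma Gsym2 (α β γ : Fin 9) : Gconst α β γ = Gconst α γ β := by
  unfold Gconst
  rw [Matrix.trace_add, Matrix.trace_add,
    Matrix.trace_mul_comm (gm β) (gm γ),
    Matrix.trace_mul_comm (gm γ) (gm α),
    Matrix.trace_mul_comm (gm α) (gm β)]
  ring

theorem stmt_15 :
    (∀ α β γ : Fin 9, Gconst α β γ = Gconst β α γ ∧ Gconst α β γ = Gconst α γ β) ∧
    (∀ K : Matrix (Fin 3) (Fin 3) ℂ, K.IsHermitian →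
      K.det = (1 / 12 : ℂ) * ∑ α, ∑ β, ∑ γ,
        Gconst α β γ * (K * gm α).trace * (K * gm β).trace * (K * gm γ).trace) := by
  exact ⟨fun α β γ => ⟨Gsym1 α β γ, Gsym2 α β γ⟩, fun K _ => main K⟩
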